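/- Let t ≥ 3, let T be the 4-regular torus graph on m² = tk vertices, namely the box product C_m □ C_m with m ≥ 5, and let c be a coloring with t types where each color class has size exactly k. If c is an equilibrium under the difference-seeking utility U_#, then sw(c, U_#) ≥ (4t − 13)k and sw(c, U_#) ≥ (3t − 3)k. -/

import Mathlib

open SimpleGraph Finset

/-- The coloring obtained from `c` by swapping the colors (agents) at `u` and `v`. -/
def swapColoring {V : Type*} [DecidableEq V] {t : ℕ} (c : V → Fin t) (u v : V) : V → Fin t :=
  fun w => if w = u then c v else if w = v then c u else c w

/-- The binary utility `U_b`: 1 if some neighbor has a different type, 0 otherwise. -/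
def Ub {V : Type*} [Fintype V] (G : SimpleGraph V) [DecidableRel G.Adj]
    {t : ℕ} (c : V → Fin t) (v : V) : ℕ :=
  if ∃ w ∈ G.neighborFinset v, c w ≠ c v then 1 else 0

/-- The difference-seeking utility `U_#`: the number of neighbors of a different type. -/
def Usharp {V : Type*} [Fintype V] (G : SimpleGraph V) [DecidableRel G.Adj]
    {t : ℕ} (c : V → Fin t) (v : V) : ℕ :=
  ((G.neighborFinset v).filter fun w => c w ≠ c v).card

/-- `T_c(v)`: the set of types present in the neighborhood of `v`. -/
def typesIn {V : Type*} [Fintype V] (G : SimpleGraph V) [DecidableRel G.Adj]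
    {t : ℕ} (c : V → Fin t) (v : V) : Finset (Fin t) :=
  (G.neighborFinset v).image c

/-- The variety-seeking utility `U_τ`: the number of types other than `c v` in the
neighborhood of `v`. -/
def Utau {V : Type*} [Fintype V] (G : SimpleGraph V) [DecidableRel G.Adj]
    {t : ℕ} (c : V → Fin t) (v : V) : ℕ :=
  ((typesIn G c v).erase (c v)).card

/-- The swap of `u` and `v` is improving under utility `U`. -/
def ImprovingSwap {V : Type*} [DecidableEq V] {t : ℕ}
    (U : (V → Fin t) → V → ℕ) (c : V → Fin t) (u v : V) : Prop :=
  U c u < U (swapColoring c u v) v ∧ U c v < U (swapColoring c u v) u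

/-- `c` is an equilibrium under the utility `U`: no improving swap exists. -/
def Equilibrium {V : Type*} [DecidableEq V] {t : ℕ}
    (U : (V → Fin t) → V → ℕ) (c : V → Fin t) : Prop :=
  ∀ u v : V, c u ≠ c v → ¬ ImprovingSwap U c u v

/-- The number of monochromatic edges of `c`. -/
def monoCount {V : Type*} [Fintype V] [DecidableEq V] (G : SimpleGraph V) [DecidableRel G.Adj]
    {t : ℕ} (c : V → Fin t) : ℕ :=
  (G.edgeFinset.filter fun e => (e.map c).IsDiag).card

/-- The number of colorful edges of `c`. -/
def ceCount {V : Type*} [Fintype V] [DecidableEq V] (G : SimpleGraph V) [DecidableRel G.Adj]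
    {t : ℕ} (c : V → Fin t) : ℕ :=
  (G.edgeFinset.filter fun e => ¬ (e.map c).IsDiag).card

/-- The cycle graph on `ZMod n`: `i` adjacent to `i + 1` and `i - 1`. -/
def cycleZMod (n : ℕ) : SimpleGraph (ZMod n) := SimpleGraph.circulantGraph {1}

instance (n : ℕ) : DecidableRel (cycleZMod n).Adj := fun a b =>
  decidable_of_iff (a ≠ b ∧ (a - b = 1 ∨ b - a = 1)) (by simp [cycleZMod])

instance {α β : Type*} (G : SimpleGraph α) (H : SimpleGraph β)
    [DecidableRel G.Adj] [DecidableRel H.Adj] [DecidableEq α] [DecidableEq β] :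
    DecidableRel (G □ H).Adj := fun x y =>
  decidable_of_iff (G.Adj x.1 y.1 ∧ x.2 = y.2 ∨ H.Adj x.2 y.2 ∧ x.1 = y.1)
    (SimpleGraph.boxProd_adj).symm

/-!
Write `s(v, x)` for the number of neighbours of `v` of type `x`. On a 4-regular graph
`U_#(v) = 4 - s(v, c v)`, so `sw = 4tk - ∑ᵥ s(v, c v)`, and if `a_j` is the largest `s(v, j)` over
agents `v` of type `j`, the deficit is at most `k ∑ⱼ a_j`. If agents `u`, `v` of distinct types
`i`, `j` realise `a_i` and `a_j`, swapping them is improving unless `a_i ≤ s(v, i)` or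
`a_j ≤ s(u, j)`. Orienting pairs of types accordingly, among the types with `a_j ≥ r` each has fewer
than `4 / r` out-neighbours, so there are at most `2 (4 / r - 1) + 1` of them: at most 7 types have
`a_j ≥ 1` and at most 3 have `a_j ≥ 2`. As also `a_i + a_j ≤ 4` for distinct types with positive
`a`, this gives `∑ⱼ a_j ≤ min t 7 + 3`.
-/

theorem Finset.card_le_two_mul_add_one_of_mem_or_mem {α : Type*} [DecidableEq α]
    (R : Finset α) (f : α → Finset α) {d : ℕ} (hf : ∀ j ∈ R, #(f j) ≤ d)
    (hR : ∀ i ∈ R, ∀ j ∈ R, i ≠ j → i ∈ f j ∨ j ∈ f i) : #R ≤ 2 * d + 1 := by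
  set A := R.biUnion fun j => (f j).image (·, j)
  have hA : #A ≤ #R * d := calc
    #A ≤ ∑ j ∈ R, #((f j).image (·, j)) := card_biUnion_le
    _ ≤ ∑ _j ∈ R, d := sum_le_sum fun j hj => card_image_le.trans (hf j hj)
    _ = #R * d := by rw [sum_const, smul_eq_mul]
  have hoff : R.offDiag ⊆ A ∪ A.image Prod.swap := by
    rintro ⟨i, j⟩ hij
    obtain ⟨hi, hj, hne⟩ := mem_offDiag.1 hij
    rcases hR i hi j hj hne with h | h
    · exact mem_union_left _ (mem_biUnion.2 ⟨j, hj, mem_image_of_mem _ h⟩)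
    · exact mem_union_right _
        (mem_image.2 ⟨(j, i), mem_biUnion.2 ⟨i, hi, mem_image_of_mem _ h⟩, rfl⟩)
  have hsq : #R * #R - #R ≤ 2 * (#R * d) := calc
    #R * #R - #R = #R.offDiag := by rw [offDiag_card]
    _ ≤ #(A ∪ A.image Prod.swap) := card_le_card hoff
    _ ≤ #A + #A := (card_union_le _ _).trans (Nat.add_le_add_left card_image_le _)
    _ ≤ 2 * (#R * d) := by omega
  by_contra! h
  have : #R * (2 * d + 2) ≤ #R * #R := Nat.mul_le_mul_left _ h
  have : #R * #R ≤ 2 * (#R * d) + #R := Nat.sub_le_iff_le_add.mp hsq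
  nlinarith

section Swap

variable {V : Type*} [DecidableEq V] {t : ℕ} (c : V → Fin t) (u v : V)

lemma swapColoring_comm : swapColoring c u v = swapColoring c v u := by
  ext w
  unfold swapColoring
  split_ifs <;> simp_all

lemma swapColoring_apply_right : swapColoring c u v v = c u := by
  by_cases h : v = u <;> simp [swapColoring, h]

lemma swapColoring_apply_of_ne {w : V} (hu : w ≠ u) (hv : w ≠ v) :
    swapColoring c u v w = c w := by
  simp [swapColoring, hu, hv]

end Swap

section Counting

variable {V : Type*} [Fintype V] (G : SimpleGraph V) [DecidableRel G.Adj]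
  {t : ℕ} (c : V → Fin t)

def nbrCount (v : V) (x : Fin t) : ℕ := #{w ∈ G.neighborFinset v | c w = x}

lemma Usharp_add_nbrCount (v : V) : Usharp G c v + nbrCount G c v (c v) = G.degree v := by
  rw [Usharp, nbrCount, add_comm, ← card_neighborFinset_eq_degree]
  exact card_filter_add_card_filter_not _

lemma sum_nbrCount_le_degree (v : V) (S : Finset (Fin t)) :
    ∑ x ∈ S, nbrCount G c v x ≤ G.degree v := by
  rw [← card_neighborFinset_eq_degree]
  exact (sum_card_fiberwise_eq_card_filter _ _ _).trans_le (card_filter_le _ _)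

lemma nbrCount_add_nbrCount_le_degree (v : V) {x y : Fin t} (hxy : x ≠ y) :
    nbrCount G c v x + nbrCount G c v y ≤ G.degree v := by
  simpa [sum_pair hxy] using sum_nbrCount_le_degree G c v {x, y}

lemma nbrCount_le_degree (v : V) (x : Fin t) : nbrCount G c v x ≤ G.degree v := by
  simpa using sum_nbrCount_le_degree G c v {x}

lemma sum_Usharp_add_sum_nbrCount :
    ∑ v, Usharp G c v + ∑ v, nbrCount G c v (c v) = ∑ v, G.degree v := by
  rw [← sum_add_distrib]
  exact sum_congr rfl fun v _ => Usharp_add_nbrCount G c v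

lemma degree_le_Usharp_swapColoring_add_nbrCount [DecidableEq V] (u v : V) :
    G.degree v ≤ Usharp G (swapColoring c u v) v + nbrCount G c v (c u) := by
  rw [← card_neighborFinset_eq_degree, nbrCount,
    ← card_filter_add_card_filter_not (s := G.neighborFinset v) (fun w => c w = c u), add_comm]
  refine Nat.add_le_add_right (card_le_card fun w hw => ?_) _
  obtain ⟨hwv, hcw⟩ := mem_filter.1 hw
  have hwu : w ≠ u := by rintro rfl; exact hcw rfl
  have hwv' : w ≠ v := by rintro rfl; exact G.irrefl ((G.mem_neighborFinset _ _).1 hwv)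
  refine mem_filter.2 ⟨hwv, ?_⟩
  rwa [swapColoring_apply_right, swapColoring_apply_of_ne c u v hwu hwv']

-- `Finset.sup` makes this `0` when no agent has type `j`.
def maxSameNbrs (j : Fin t) : ℕ := ({v | c v = j} : Finset V).sup fun v => nbrCount G c v j

lemma nbrCount_le_maxSameNbrs (v : V) : nbrCount G c v (c v) ≤ maxSameNbrs G c (c v) :=
  Finset.le_sup (f := fun w => nbrCount G c w (c v)) (by simp)

lemma exists_nbrCount_eq_maxSameNbrs {j : Fin t} (h : 0 < maxSameNbrs G c j) :
    ∃ v, c v = j ∧ nbrCount G c v j = maxSameNbrs G c j := by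
  have hne : ({v | c v = j} : Finset V).Nonempty := by
    rw [nonempty_iff_ne_empty]
    intro he
    simp [maxSameNbrs, he] at h
  obtain ⟨v, hv, hmax⟩ := exists_mem_eq_sup _ hne fun v => nbrCount G c v j
  exact ⟨v, (mem_filter.1 hv).2, hmax.symm⟩

lemma maxSameNbrs_le {d : ℕ} (hdeg : ∀ v, G.degree v ≤ d) (j : Fin t) :
    maxSameNbrs G c j ≤ d :=
  Finset.sup_le fun v _ => (nbrCount_le_degree G c v j).trans (hdeg v)

lemma sum_nbrCount_self_le :
    ∑ v, nbrCount G c v (c v) ≤ ∑ j, #{v | c v = j} * maxSameNbrs G c j := calc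
  ∑ v, nbrCount G c v (c v) = ∑ j, ∑ v with c v = j, nbrCount G c v (c v) :=
    (sum_fiberwise _ _ _).symm
  _ ≤ ∑ j, ∑ v with c v = j, maxSameNbrs G c j := sum_le_sum fun j _ =>
    sum_le_sum fun v hv => (mem_filter.1 hv).2 ▸ nbrCount_le_maxSameNbrs G c v
  _ = ∑ j, #{v | c v = j} * maxSameNbrs G c j := by simp only [sum_const, smul_eq_mul]

end Counting

lemma cycleZMod_degree {m : ℕ} [NeZero m] (hm : 3 ≤ m) (x : ZMod m) :
    (cycleZMod m).degree x = 2 := by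
  have hne : ∀ a : ℕ, 0 < a → a < m → (a : ZMod m) ≠ 0 := fun a ha ham h =>
    absurd (Nat.le_of_dvd ha ((ZMod.natCast_eq_zero_iff a m).1 h)) (by omega)
  have h1 : (1 : ZMod m) ≠ 0 := by exact_mod_cast hne 1 one_pos (by omega)
  have h2 : (2 : ZMod m) ≠ 0 := by exact_mod_cast hne 2 two_pos (by omega)
  have hN : (cycleZMod m).neighborFinset x = {x - 1, x + 1} := by
    ext y
    rw [mem_neighborFinset]
    simp only [cycleZMod, circulantGraph_adj, Set.mem_singleton_iff,
      mem_insert, mem_singleton]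
    constructor
    · rintro ⟨-, h | h⟩
      · exact Or.inl (by linear_combination -h)
      · exact Or.inr (by linear_combination h)
    · rintro (rfl | rfl)
      · exact ⟨fun h => h1 (by linear_combination h), Or.inl (by ring)⟩
      · exact ⟨fun h => h1 (by linear_combination -h), Or.inr (by ring)⟩
  rw [← card_neighborFinset_eq_degree, hN, card_pair fun h => h2 (by linear_combination -h)]

lemma torus_isRegularOfDegree {m : ℕ} [NeZero m] (hm : 3 ≤ m) :
    (cycleZMod m □ cycleZMod m).IsRegularOfDegree 4 := fun x => by
  convert degree_boxProd (G := cycleZMod m) (H := cycleZMod m) x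
  rw [cycleZMod_degree hm, cycleZMod_degree hm]

section Equilibrium

variable {V : Type*} [Fintype V] [DecidableEq V] {G : SimpleGraph V} [DecidableRel G.Adj]
  {t : ℕ} {c : V → Fin t} {d : ℕ}

lemma Equilibrium.nbrCount_le_or_le (hreg : G.IsRegularOfDegree d)
    (heq : Equilibrium (Usharp G) c) {u v : V} (huv : c u ≠ c v) :
    nbrCount G c u (c u) ≤ nbrCount G c v (c u) ∨
      nbrCount G c v (c v) ≤ nbrCount G c u (c v) := by
  by_contra! h
  refine heq u v huv ⟨?_, ?_⟩
  · have hu := Usharp_add_nbrCount G c u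
    have hv := degree_le_Usharp_swapColoring_add_nbrCount G c u v
    rw [hreg u] at hu
    rw [hreg v] at hv
    omega
  · have hv := Usharp_add_nbrCount G c v
    have hu := degree_le_Usharp_swapColoring_add_nbrCount G c v u
    rw [hreg v] at hv
    rw [hreg u, swapColoring_comm] at hu
    omega

lemma Equilibrium.maxSameNbrs_le_or_le (hreg : G.IsRegularOfDegree d)
    (heq : Equilibrium (Usharp G) c) {i j : Fin t} (hij : i ≠ j) {u v : V}
    (hu : c u = i) (hv : c v = j) (hui : nbrCount G c u i = maxSameNbrs G c i)
    (hvj : nbrCount G c v j = maxSameNbrs G c j) :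
    maxSameNbrs G c i ≤ nbrCount G c v i ∨ maxSameNbrs G c j ≤ nbrCount G c u j := by
  subst hu hv
  rw [← hui, ← hvj]
  exact heq.nbrCount_le_or_le hreg hij

lemma Equilibrium.maxSameNbrs_add_maxSameNbrs_le (hreg : G.IsRegularOfDegree d)
    (heq : Equilibrium (Usharp G) c) {i j : Fin t} (hij : i ≠ j)
    (hi : 0 < maxSameNbrs G c i) (hj : 0 < maxSameNbrs G c j) :
    maxSameNbrs G c i + maxSameNbrs G c j ≤ d := by
  obtain ⟨u, hu, hui⟩ := exists_nbrCount_eq_maxSameNbrs G c hi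
  obtain ⟨v, hv, hvj⟩ := exists_nbrCount_eq_maxSameNbrs G c hj
  rcases heq.maxSameNbrs_le_or_le hreg hij hu hv hui hvj with h | h
  · have := nbrCount_add_nbrCount_le_degree G c v hij
    rw [hreg v] at this
    omega
  · have := nbrCount_add_nbrCount_le_degree G c u hij
    rw [hreg u] at this
    omega

lemma Equilibrium.card_maxSameNbrs_ge_le (hreg : G.IsRegularOfDegree d)
    (heq : Equilibrium (Usharp G) c) {r : ℕ} (hr : 0 < r) :
    #{j | r ≤ maxSameNbrs G c j} ≤ 2 * (d / r - 1) + 1 := by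
  rcases isEmpty_or_nonempty V with hV | hV
  · simp [maxSameNbrs, univ_eq_empty, hr.ne']
  have hw : ∀ j, ∃ v, 0 < maxSameNbrs G c j →
      c v = j ∧ nbrCount G c v j = maxSameNbrs G c j := fun j => by
    by_cases h : 0 < maxSameNbrs G c j
    · obtain ⟨v, hv⟩ := exists_nbrCount_eq_maxSameNbrs G c h
      exact ⟨v, fun _ => hv⟩
    · exact ⟨Classical.arbitrary V, fun h' => absurd h' h⟩
  choose w hw using hw
  refine card_le_two_mul_add_one_of_mem_or_mem _
    (fun j => {i | i ≠ j ∧ r ≤ nbrCount G c (w j) i}) (fun j hj => ?_) fun i hi j hj hij => ?_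
  · set f := ({i | i ≠ j ∧ r ≤ nbrCount G c (w j) i} : Finset (Fin t))
    have hrj : r ≤ maxSameNbrs G c j := (mem_filter.1 hj).2
    have hwj := (hw j (by omega)).2
    have : (#f + 1) * r ≤ d := calc
      (#f + 1) * r = #(insert j f) • r := by
        rw [card_insert_of_notMem (by simp [f]), smul_eq_mul]
      _ ≤ ∑ i ∈ insert j f, nbrCount G c (w j) i := card_nsmul_le_sum _ _ _ fun i hi => by
        rcases mem_insert.1 hi with rfl | hi
        · omega
        · exact (mem_filter.1 hi).2.2
      _ ≤ G.degree (w j) := sum_nbrCount_le_degree G c _ _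
      _ = d := hreg _
    have := (Nat.le_div_iff_mul_le hr).2 this
    omega
  · have hri : r ≤ maxSameNbrs G c i := (mem_filter.1 hi).2
    have hrj : r ≤ maxSameNbrs G c j := (mem_filter.1 hj).2
    obtain ⟨hwi, hwii⟩ := hw i (by omega)
    obtain ⟨hwj, hwjj⟩ := hw j (by omega)
    rcases heq.maxSameNbrs_le_or_le hreg hij hwi hwj hwii hwjj with h | h
    · exact Or.inl (mem_filter.2 ⟨mem_univ _, hij, hri.trans h⟩)
    · exact Or.inr (mem_filter.2 ⟨mem_univ _, hij.symm, hrj.trans h⟩)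

end Equilibrium

section FourRegular

variable {V : Type*} [Fintype V] [DecidableEq V] {G : SimpleGraph V} [DecidableRel G.Adj]
  {t : ℕ} {c : V → Fin t}

lemma Equilibrium.sum_maxSameNbrs_le (hreg : G.IsRegularOfDegree 4)
    (heq : Equilibrium (Usharp G) c) :
    ∑ j, maxSameNbrs G c j ≤ #{j | 1 ≤ maxSameNbrs G c j} + 3 := by
  set a := maxSameNbrs G c
  set P : Finset (Fin t) := {j | 2 ≤ a j}
  have hP : #P ≤ 3 := by simpa using heq.card_maxSameNbrs_ge_le hreg two_pos
  have ha : ∀ j, a j ≤ 4 := maxSameNbrs_le G c fun v => (hreg v).le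
  have hexcess : ∑ j, (a j - 1) ≤ 3 := by
    rw [← sum_filter_of_ne (p := fun j => 2 ≤ a j) fun j _ h => by omega]
    rcases le_or_gt #P 1 with hP1 | hP1
    · calc ∑ j ∈ P, (a j - 1) ≤ ∑ _j ∈ P, 3 := sum_le_sum fun j _ => by have := ha j; omega
        _ = #P * 3 := by rw [sum_const, smul_eq_mul]
        _ ≤ 3 := by omega
    · calc ∑ j ∈ P, (a j - 1) ≤ ∑ _j ∈ P, 1 := sum_le_sum fun j hj => ?_
        _ = #P := by rw [sum_const, smul_eq_mul, mul_one]
        _ ≤ 3 := hP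
      obtain ⟨i, hi, hij⟩ := exists_mem_ne hP1 j
      have hai : 2 ≤ a i := (mem_filter.1 hi).2
      have haj : 2 ≤ a j := (mem_filter.1 hj).2
      have : a i + a j ≤ 4 := heq.maxSameNbrs_add_maxSameNbrs_le hreg hij
        (two_pos.trans_le hai) (two_pos.trans_le haj)
      omega
  calc ∑ j, a j ≤ ∑ j, ((if 1 ≤ a j then 1 else 0) + (a j - 1)) :=
        sum_le_sum fun j _ => by split_ifs <;> omega
    _ = #{j | 1 ≤ a j} + ∑ j, (a j - 1) := by rw [sum_add_distrib, card_filter]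
    _ ≤ #{j | 1 ≤ a j} + 3 := by omega

theorem Equilibrium.four_mul_le_sum_Usharp_add (hreg : G.IsRegularOfDegree 4)
    (heq : Equilibrium (Usharp G) c) {k : ℕ} (hsize : ∀ j, #{v | c v = j} = k) :
    4 * (t * k) ≤ ∑ v, Usharp G c v + k * (min t 7 + 3) := by
  have hcard : Fintype.card V = t * k := by
    rw [← card_univ, card_eq_sum_card_fiberwise fun v _ => mem_univ (c v)]
    simp [hsize]
  have hsum : ∑ v, Usharp G c v + ∑ v, nbrCount G c v (c v) = 4 * (t * k) := by
    rw [sum_Usharp_add_sum_nbrCount, sum_congr rfl fun v _ => hreg v, sum_const, card_univ,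
      hcard, smul_eq_mul, mul_comm]
  have hR : #{j | 1 ≤ maxSameNbrs G c j} ≤ min t 7 := le_min
    ((card_filter_le _ _).trans (by simp)) (by simpa using heq.card_maxSameNbrs_ge_le hreg one_pos)
  have hsame : ∑ v, nbrCount G c v (c v) ≤ k * (min t 7 + 3) := calc
    ∑ v, nbrCount G c v (c v) ≤ ∑ j, #{v | c v = j} * maxSameNbrs G c j :=
      sum_nbrCount_self_le G c
    _ = k * ∑ j, maxSameNbrs G c j := by simp only [hsize, mul_sum]
    _ ≤ k * (min t 7 + 3) := Nat.mul_le_mul_left _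
      ((heq.sum_maxSameNbrs_le hreg).trans (Nat.add_le_add_right hR 3))
  omega

end FourRegular

theorem stmt18_general (t k m : ℕ) (hm : 5 ≤ m) [NeZero m]
    (c : ZMod m × ZMod m → Fin t)
    (hsize : ∀ i : Fin t,
      ((Finset.univ : Finset (ZMod m × ZMod m)).filter fun v => c v = i).card = k)
    (heq : Equilibrium (Usharp (cycleZMod m □ cycleZMod m)) c) :
    (4 * (t : ℤ) - 13) * (k : ℤ) ≤
        (↑(∑ v, Usharp (cycleZMod m □ cycleZMod m) c v) : ℤ) ∧
      (3 * (t : ℤ) - 3) * (k : ℤ) ≤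
        (↑(∑ v, Usharp (cycleZMod m □ cycleZMod m) c v) : ℤ) := by
  -- `convert` trades the box-product `Fintype` instance on neighbour sets for the generic one.
  have h := heq.four_mul_le_sum_Usharp_add
    (by convert torus_isRegularOfDegree (m := m) (by omega)) hsize
  have hk7 : k * min t 7 ≤ k * 7 := Nat.mul_le_mul_left _ (min_le_right _ _)
  have hkt : k * min t 7 ≤ k * t := Nat.mul_le_mul_left _ (min_le_left _ _)
  generalize ∑ v, Usharp (cycleZMod m □ cycleZMod m) c v = S at h ⊢
  zify at h hk7 hkt
  constructor <;> linarith

theorem stmt18 (t k m : ℕ) (ht : 3 ≤ t) (hm : 5 ≤ m) (hn : m * m = t * k) [NeZero m]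
    (c : ZMod m × ZMod m → Fin t)
    (hsize : ∀ i : Fin t,
      ((Finset.univ : Finset (ZMod m × ZMod m)).filter fun v => c v = i).card = k)
    (heq : Equilibrium (Usharp (cycleZMod m □ cycleZMod m)) c) :
    (4 * (t : ℤ) - 13) * (k : ℤ) ≤
        (↑(∑ v, Usharp (cycleZMod m □ cycleZMod m) c v) : ℤ) ∧
      (3 * (t : ℤ) - 3) * (k : ℤ) ≤
        (↑(∑ v, Usharp (cycleZMod m □ cycleZMod m) c v) : ℤ) :=
  stmt18_general t k m hm c hsize heq
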